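/- arXiv:2303.16834 — 3 statements merged into one kernel-verified Lean document; each statement's English description precedes it below -/
import Mathlib

section
/- Let Γ be an irreducible finite directed graph and Γ' a degree-two cover of Γ. Then either Γ' is irreducible, or Γ' has exactly two connected components, each isomorphic to Γ as a directed graph. -/
/-- A directed (multi)graph on vertex set `V` with edge set `E`. -/
structure Digraph' (V E : Type) where
  src : E → V
  tgt : E → V

/-- A directed graph is irreducible if for any two vertices `u`, `v` there is a
(nonempty) directed path from `u` to `v`. -/
def Digraph'.Irreducible {V E : Type} (Γ : Digraph' V E) : Prop :=
  ∀ u v : V, Relation.TransGen (fun a b => ∃ e : E, Γ.src e = a ∧ Γ.tgt e = b) u v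

/-- `Γ'` is a degree-two cover of `Γ` via `pV, pE`: the projections commute with
source and target, every vertex has exactly two preimages, and the projection is a local
isomorphism (bijective on outgoing and on incoming edges at every vertex). -/
def IsDegreeTwoCover {V E V' E' : Type} (Γ' : Digraph' V' E') (Γ : Digraph' V E)
    (pV : V' → V) (pE : E' → E) : Prop :=
  (∀ e : E', pV (Γ'.src e) = Γ.src (pE e)) ∧
  (∀ e : E', pV (Γ'.tgt e) = Γ.tgt (pE e)) ∧
  (∀ v : V, Nat.card {v' : V' // pV v' = v} = 2) ∧
  (∀ (v' : V') (e : E), Γ.src e = pV v' → ∃! e' : E', Γ'.src e' = v' ∧ pE e' = e) ∧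
  (∀ (v' : V') (e : E), Γ.tgt e = pV v' → ∃! e' : E', Γ'.tgt e' = v' ∧ pE e' = e)

/-!
Suppose `Γ'` is not irreducible, say `v₀` is not reachable from `u₀`, and let `S` be the set of
vertices reachable from `u₀`. Lifting paths of `Γ` forwards shows that `S` meets every fibre of
the cover; lifting backwards to `v₀` a path of `Γ` that ends at `pV v₀` shows that `S` cannot
contain a whole fibre. So `S` and its complement each meet every fibre exactly once, and both
are closed under outgoing edges (for the complement this uses uniqueness of lifts of incoming
edges). Each of them is then the image of a section of the cover that is a morphism of
digraphs, and the two sections together identify `Γ'` with two disjoint copies of `Γ`.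
-/

open Function

def IsTransversal {α β : Type*} (f : α → β) (S : Set α) : Prop :=
  ∀ b, ∃! a, f a = b ∧ a ∈ S

section FibreOfCardTwo

variable {α β : Type*} {f : α → β}

lemma eq_or_eq_of_card_fiber_eq_two {b : β} (h : Nat.card {a // f a = b} = 2) {x y z : α}
    (hx : f x = b) (hy : f y = b) (hz : f z = b) (hxy : x ≠ y) : z = x ∨ z = y := by
  obtain ⟨w, -, hw⟩ := (Nat.card_eq_two_iff' (⟨x, hx⟩ : {a // f a = b})).1 h
  by_contra! hne
  have hyw : ⟨y, hy⟩ = w := hw _ fun h => hxy (congrArg Subtype.val h).symm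
  have hzw : ⟨z, hz⟩ = w := hw _ fun h => hne.1 (congrArg Subtype.val h)
  exact hne.2 (congrArg Subtype.val (hzw.trans hyw.symm))

lemma IsTransversal.compl (hcard : ∀ b, Nat.card {a // f a = b} = 2) {S : Set α}
    (hS : IsTransversal f S) : IsTransversal f Sᶜ := by
  intro b
  obtain ⟨x, ⟨hx, hxS⟩, hxuniq⟩ := hS b
  obtain ⟨⟨y, hy⟩, hne, -⟩ := (Nat.card_eq_two_iff' (⟨x, hx⟩ : {a // f a = b})).1 (hcard b)
  have hyx : y ≠ x := fun h => hne (Subtype.ext h)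
  have hyS : y ∉ S := fun hyS => hyx (hxuniq y ⟨hy, hyS⟩)
  refine ⟨y, ⟨hy, hyS⟩, fun z ⟨hz, hzS⟩ => ?_⟩
  rcases eq_or_eq_of_card_fiber_eq_two (hcard b) hx hy hz hyx.symm with rfl | rfl
  · exact absurd hxS hzS
  · rfl

end FibreOfCardTwo

namespace Digraph'

variable {V E V' E' : Type}

def Adj (Γ : Digraph' V E) (a b : V) : Prop :=
  ∃ e, Γ.src e = a ∧ Γ.tgt e = b

def Reaches (Γ : Digraph' V E) : V → V → Prop :=
  Relation.TransGen Γ.Adj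

def IsForwardClosed (Γ : Digraph' V E) (S : Set V) : Prop :=
  ∀ e, Γ.src e ∈ S → Γ.tgt e ∈ S

lemma isForwardClosed_setOf_reaches (Γ : Digraph' V E) (u : V) :
    Γ.IsForwardClosed {w | Γ.Reaches u w} :=
  fun e he => Relation.TransGen.tail he ⟨e, rfl, rfl⟩

/-- The defining properties of a degree-two cover other than the size of the fibres. -/
structure IsCovering (Γ' : Digraph' V' E') (Γ : Digraph' V E) (pV : V' → V) (pE : E' → E) :
    Prop where
  src_comm : ∀ e, pV (Γ'.src e) = Γ.src (pE e)
  tgt_comm : ∀ e, pV (Γ'.tgt e) = Γ.tgt (pE e)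
  existsUnique_src : ∀ v' e, Γ.src e = pV v' → ∃! e', Γ'.src e' = v' ∧ pE e' = e
  existsUnique_tgt : ∀ v' e, Γ.tgt e = pV v' → ∃! e', Γ'.tgt e' = v' ∧ pE e' = e

structure IsSection (Γ' : Digraph' V' E') (Γ : Digraph' V E) (pV : V' → V) (pE : E' → E)
    (sV : V → V') (sE : E → E') : Prop where
  proj_vert : ∀ v, pV (sV v) = v
  proj_edge : ∀ e, pE (sE e) = e
  src_eq : ∀ e, Γ'.src (sE e) = sV (Γ.src e)
  tgt_eq : ∀ e, Γ'.tgt (sE e) = sV (Γ.tgt e)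

namespace IsCovering

variable {Γ' : Digraph' V' E'} {Γ : Digraph' V E} {pV : V' → V} {pE : E' → E}

lemma eq_of_src_eq (hp : Γ'.IsCovering Γ pV pE) {e₁ e₂ : E'} (hsrc : Γ'.src e₁ = Γ'.src e₂)
    (hproj : pE e₁ = pE e₂) : e₁ = e₂ :=
  (hp.existsUnique_src (Γ'.src e₂) (pE e₂) (hp.src_comm e₂).symm).unique ⟨hsrc, hproj⟩ ⟨rfl, rfl⟩

lemma eq_of_tgt_eq (hp : Γ'.IsCovering Γ pV pE) {e₁ e₂ : E'} (htgt : Γ'.tgt e₁ = Γ'.tgt e₂)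
    (hproj : pE e₁ = pE e₂) : e₁ = e₂ :=
  (hp.existsUnique_tgt (Γ'.tgt e₂) (pE e₂) (hp.tgt_comm e₂).symm).unique ⟨htgt, hproj⟩ ⟨rfl, rfl⟩

lemma exists_reaches_lift (hp : Γ'.IsCovering Γ pV pE) {a b : V} (h : Γ.Reaches a b) {a' : V'}
    (ha : pV a' = a) : ∃ b', pV b' = b ∧ Γ'.Reaches a' b' := by
  induction h with
  | single hab =>
    obtain ⟨e, rfl, rfl⟩ := hab
    obtain ⟨e', hsrc, rfl⟩ := (hp.existsUnique_src a' e ha.symm).exists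
    exact ⟨Γ'.tgt e', hp.tgt_comm e', .single ⟨e', hsrc, rfl⟩⟩
  | tail _ hbc ih =>
    obtain ⟨b', hb, hab'⟩ := ih
    obtain ⟨e, rfl, rfl⟩ := hbc
    obtain ⟨e', hsrc, rfl⟩ := (hp.existsUnique_src b' e hb.symm).exists
    exact ⟨Γ'.tgt e', hp.tgt_comm e', hab'.tail ⟨e', hsrc, rfl⟩⟩

lemma exists_reaches_lift_to (hp : Γ'.IsCovering Γ pV pE) {a b : V} (h : Γ.Reaches a b)
    {b' : V'} (hb : pV b' = b) : ∃ a', pV a' = a ∧ Γ'.Reaches a' b' := by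
  induction h using Relation.TransGen.head_induction_on with
  | single hab =>
    obtain ⟨e, rfl, rfl⟩ := hab
    obtain ⟨e', htgt, rfl⟩ := (hp.existsUnique_tgt b' e hb.symm).exists
    exact ⟨Γ'.src e', hp.src_comm e', .single ⟨e', rfl, htgt⟩⟩
  | head hac _ ih =>
    obtain ⟨c', hc, hcb'⟩ := ih
    obtain ⟨e, rfl, rfl⟩ := hac
    obtain ⟨e', htgt, rfl⟩ := (hp.existsUnique_tgt c' e hc.symm).exists
    exact ⟨Γ'.src e', hp.src_comm e', hcb'.head ⟨e', rfl, htgt⟩⟩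

-- The lift of `pE e'` starting in `S` ends in `S`, hence at `Γ'.tgt e'`, hence it is `e'`.
lemma src_mem_of_tgt_mem (hp : Γ'.IsCovering Γ pV pE) {S : Set V'}
    (hclosed : Γ'.IsForwardClosed S) (hS : IsTransversal pV S) {e' : E'}
    (htgt : Γ'.tgt e' ∈ S) : Γ'.src e' ∈ S := by
  obtain ⟨s, ⟨hs, hsS⟩, -⟩ := hS (Γ.src (pE e'))
  obtain ⟨f, hfsrc, hfproj⟩ := (hp.existsUnique_src s (pE e') hs.symm).exists
  have hftgt : Γ'.tgt f = Γ'.tgt e' :=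
    (hS (Γ.tgt (pE e'))).unique ⟨by rw [hp.tgt_comm, hfproj], hclosed f (hfsrc ▸ hsS)⟩
      ⟨hp.tgt_comm e', htgt⟩
  rw [← hp.eq_of_tgt_eq hftgt hfproj, hfsrc]
  exact hsS

lemma isForwardClosed_compl (hp : Γ'.IsCovering Γ pV pE) {S : Set V'}
    (hclosed : Γ'.IsForwardClosed S) (hS : IsTransversal pV S) : Γ'.IsForwardClosed Sᶜ :=
  fun _ hsrc htgt => hsrc (hp.src_mem_of_tgt_mem hclosed hS htgt)

lemma exists_isSection (hp : Γ'.IsCovering Γ pV pE) {S : Set V'}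
    (hclosed : Γ'.IsForwardClosed S) (hS : IsTransversal pV S) :
    ∃ sV sE, Γ'.IsSection Γ pV pE sV sE ∧ ∀ v, sV v ∈ S := by
  choose sV hproj hsS using fun v => (hS v).exists
  choose sE hsrc hprojE using fun e => (hp.existsUnique_src (sV (Γ.src e)) e (hproj _).symm).exists
  refine ⟨sV, sE, ⟨hproj, hprojE, hsrc, fun e => ?_⟩, hsS⟩
  exact (hS (Γ.tgt e)).unique ⟨by rw [hp.tgt_comm, hprojE], hclosed _ (hsrc e ▸ hsS _)⟩
    ⟨hproj _, hsS _⟩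

end IsCovering

namespace IsSection

variable {Γ' : Digraph' V' E'} {Γ : Digraph' V E} {pV : V' → V} {pE : E' → E}
  {sV tV : V → V'} {sE tE : E → E'}

lemma bijective_sumElim_vert (hs : Γ'.IsSection Γ pV pE sV sE)
    (ht : Γ'.IsSection Γ pV pE tV tE) (hst : ∀ v, sV v ≠ tV v)
    (hcard : ∀ v, Nat.card {v' // pV v' = v} = 2) : Bijective (Sum.elim sV tV) := by
  refine ⟨(LeftInverse.injective hs.proj_vert).sumElim (LeftInverse.injective ht.proj_vert)
    fun a b hab => ?_, fun v' => ?_⟩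
  · obtain rfl : a = b := by rw [← hs.proj_vert a, ← ht.proj_vert b, hab]
    exact hst a hab
  · rcases eq_or_eq_of_card_fiber_eq_two (hcard (pV v')) (hs.proj_vert _) (ht.proj_vert _) rfl
      (hst _) with h | h
    · exact ⟨.inl (pV v'), h.symm⟩
    · exact ⟨.inr (pV v'), h.symm⟩

lemma bijective_sumElim_edge (hp : Γ'.IsCovering Γ pV pE) (hs : Γ'.IsSection Γ pV pE sV sE)
    (ht : Γ'.IsSection Γ pV pE tV tE) (hst : ∀ v, sV v ≠ tV v)
    (hcard : ∀ v, Nat.card {v' // pV v' = v} = 2) : Bijective (Sum.elim sE tE) := by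
  refine ⟨(LeftInverse.injective hs.proj_edge).sumElim (LeftInverse.injective ht.proj_edge)
    fun a b hab => ?_, fun e' => ?_⟩
  · obtain rfl : a = b := by rw [← hs.proj_edge a, ← ht.proj_edge b, hab]
    exact hst _ (by rw [← hs.src_eq, ← ht.src_eq, hab])
  · rcases eq_or_eq_of_card_fiber_eq_two (hcard (Γ.src (pE e'))) (hs.proj_vert _)
      (ht.proj_vert _) (hp.src_comm e') (hst _) with h | h
    · exact ⟨.inl (pE e'), hp.eq_of_src_eq (e₁ := sE _) (by rw [hs.src_eq, h]) (hs.proj_edge _)⟩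
    · exact ⟨.inr (pE e'), hp.eq_of_src_eq (e₁ := tE _) (by rw [ht.src_eq, h]) (ht.proj_edge _)⟩

end IsSection

end Digraph'

namespace IsDegreeTwoCover

variable {V E V' E' : Type} {Γ' : Digraph' V' E'} {Γ : Digraph' V E} {pV : V' → V}
  {pE : E' → E}

lemma isCovering (hcov : IsDegreeTwoCover Γ' Γ pV pE) : Γ'.IsCovering Γ pV pE :=
  ⟨hcov.1, hcov.2.1, hcov.2.2.2.1, hcov.2.2.2.2⟩

lemma card_fiber (hcov : IsDegreeTwoCover Γ' Γ pV pE) (v : V) :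
    Nat.card {v' // pV v' = v} = 2 :=
  hcov.2.2.1 v

lemma exists_isForwardClosed_isTransversal (hcov : IsDegreeTwoCover Γ' Γ pV pE)
    (hirr : Γ.Irreducible) (hred : ¬Γ'.Irreducible) :
    ∃ S : Set V', Γ'.IsForwardClosed S ∧ IsTransversal pV S := by
  obtain ⟨u₀, v₀, hv₀⟩ : ∃ u₀ v₀, ¬Γ'.Reaches u₀ v₀ := by
    by_contra! h
    exact hred h
  refine ⟨{w | Γ'.Reaches u₀ w}, Γ'.isForwardClosed_setOf_reaches u₀, fun v => ?_⟩
  obtain ⟨x, hx, hxS⟩ := hcov.isCovering.exists_reaches_lift (hirr (pV u₀) v) rfl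
  refine ⟨x, ⟨hx, hxS⟩, fun y ⟨hy, hyS⟩ => by_contra fun hyx => ?_⟩
  obtain ⟨z, hz, hzv₀⟩ := hcov.isCovering.exists_reaches_lift_to (hirr v (pV v₀)) rfl
  have hzS : Γ'.Reaches u₀ z := by
    rcases eq_or_eq_of_card_fiber_eq_two (hcov.card_fiber v) hy hx hz hyx with rfl | rfl
    exacts [hyS, hxS]
  exact hv₀ (hzS.trans hzv₀)

end IsDegreeTwoCover

theorem degree_two_cover_irreducible_or_two_components_general
    (V E V' E' : Type)
    (Γ : Digraph' V E) (Γ' : Digraph' V' E')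
    (pV : V' → V) (pE : E' → E)
    (hcov : IsDegreeTwoCover Γ' Γ pV pE)
    (hirr : Γ.Irreducible) :
    Γ'.Irreducible ∨
      ∃ (fV : V ⊕ V ≃ V') (fE : E ⊕ E ≃ E'),
        (∀ e : E, Γ'.src (fE (Sum.inl e)) = fV (Sum.inl (Γ.src e)) ∧
            Γ'.tgt (fE (Sum.inl e)) = fV (Sum.inl (Γ.tgt e))) ∧
        (∀ e : E, Γ'.src (fE (Sum.inr e)) = fV (Sum.inr (Γ.src e)) ∧
            Γ'.tgt (fE (Sum.inr e)) = fV (Sum.inr (Γ.tgt e))) := by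
  by_cases hred : Γ'.Irreducible
  · exact .inl hred
  have hp := hcov.isCovering
  obtain ⟨S, hclosed, hS⟩ := hcov.exists_isForwardClosed_isTransversal hirr hred
  obtain ⟨sV, sE, hs, hsS⟩ := hp.exists_isSection hclosed hS
  obtain ⟨tV, tE, ht, htS⟩ :=
    hp.exists_isSection (hp.isForwardClosed_compl hclosed hS) (hS.compl hcov.card_fiber)
  have hst : ∀ v, sV v ≠ tV v := fun v h => htS v (h ▸ hsS v)
  exact .inr ⟨.ofBijective _ (hs.bijective_sumElim_vert ht hst hcov.card_fiber),
    .ofBijective _ (hs.bijective_sumElim_edge hp ht hst hcov.card_fiber),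
    fun e => ⟨hs.src_eq e, hs.tgt_eq e⟩, fun e => ⟨ht.src_eq e, ht.tgt_eq e⟩⟩

/-- Let `Γ` be an irreducible finite directed graph and `Γ'` a degree-two cover of `Γ`.
Then either `Γ'` is irreducible, or `Γ'` has two connected components, each isomorphic to
`Γ` (i.e. `Γ'` is isomorphic to the disjoint union of two copies of `Γ`). -/
theorem degree_two_cover_irreducible_or_two_components
    (V E V' E' : Type) [Fintype V] [Fintype E] [Fintype V'] [Fintype E']
    (Γ : Digraph' V E) (Γ' : Digraph' V' E')
    (pV : V' → V) (pE : E' → E)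
    (hcov : IsDegreeTwoCover Γ' Γ pV pE)
    (hirr : Γ.Irreducible) :
    Γ'.Irreducible ∨
      ∃ (fV : V ⊕ V ≃ V') (fE : E ⊕ E ≃ E'),
        (∀ e : E, Γ'.src (fE (Sum.inl e)) = fV (Sum.inl (Γ.src e)) ∧
            Γ'.tgt (fE (Sum.inl e)) = fV (Sum.inl (Γ.tgt e))) ∧
        (∀ e : E, Γ'.src (fE (Sum.inr e)) = fV (Sum.inr (Γ.src e)) ∧
            Γ'.tgt (fE (Sum.inr e)) = fV (Sum.inr (Γ.tgt e))) :=
  degree_two_cover_irreducible_or_two_components_general V E V' E' Γ Γ' pV pE hcov hirr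
end

section
/- Let Γ be an irreducible finite directed graph with adjacency matrix A, and let Γ' be a degree-two cover of Γ with adjacency matrix A'. If Γ' is irreducible, then the Perron–Frobenius eigenvalues of A and A' are equal. -/
open scoped ENNReal

/-- The adjacency matrix of a finite directed graph: the `(u, v)` entry is the number of
directed edges from `u` to `v`. -/
def Digraph'.adj {V E : Type} [Fintype E] [DecidableEq V] (Γ : Digraph' V E) :
    Matrix V V ℕ :=
  fun u v => (Finset.univ.filter (fun e : E => Γ.src e = u ∧ Γ.tgt e = v)).card

/-!
An out-edge lifting `(pV, pE) : Γ' → Γ` gives `A' (x ∘ pV) = (A x) ∘ pV` for every vector `x`,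
where `A`, `A'` are the adjacency matrices. Taking `x = 1`, the row sums of `A'^n` are those of
`A^n` pulled back along the surjection `pV`, so the `ℓ^∞` operator norms of `A^n` and `A'^n` coincide
for every `n`, and Gelfand's formula `ρ(A) = lim ‖A^n‖^(1/n)` gives `ρ(A) = ρ(A')`.
-/

open Finset Matrix

theorem Matrix.pow_mulVec_comp {m n R : Type*} [Fintype m] [Fintype n] [DecidableEq m]
    [DecidableEq n] [Semiring R] {A : Matrix m m R} {B : Matrix n n R} {p : m → n}
    (h : ∀ x, A *ᵥ (x ∘ p) = (B *ᵥ x) ∘ p) (k : ℕ) (x : n → R) :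
    A ^ k *ᵥ (x ∘ p) = (B ^ k *ᵥ x) ∘ p := by
  induction k generalizing x with
  | zero => simp
  | succ k ih => rw [pow_succ, pow_succ, ← mulVec_mulVec, h, ih, mulVec_mulVec]

namespace Digraph'

variable {V E V' E' : Type}

structure IsOutCovering (Γ' : Digraph' V' E') (Γ : Digraph' V E) (pV : V' → V) (pE : E' → E) :
    Prop where
  src_comm : ∀ e', pV (Γ'.src e') = Γ.src (pE e')
  tgt_comm : ∀ e', pV (Γ'.tgt e') = Γ.tgt (pE e')
  existsUnique_lift : ∀ v' e, Γ.src e = pV v' → ∃! e', Γ'.src e' = v' ∧ pE e' = e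

theorem adj_mulVec_apply [Fintype E] [Fintype V] [DecidableEq V] (Γ : Digraph' V E)
    (x : V → ℕ) (u : V) : (Γ.adj *ᵥ x) u = ∑ e with Γ.src e = u, x (Γ.tgt e) := by
  rw [← sum_fiberwise _ Γ.tgt]
  refine sum_congr rfl fun w _ => ?_
  rw [filter_filter, sum_congr rfl fun e he => by rw [(mem_filter.1 he).2.2], sum_const,
    smul_eq_mul]
  rfl

variable {Γ : Digraph' V E} {Γ' : Digraph' V' E'} {pV : V' → V} {pE : E' → E}

theorem IsOutCovering.sum_out_edges [Fintype E] [Fintype E'] [DecidableEq V] [DecidableEq V']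
    {M : Type*} [AddCommMonoid M]
    (hcov : Γ'.IsOutCovering Γ pV pE) (f : E → M) (v' : V') :
    ∑ e' with Γ'.src e' = v', f (pE e') = ∑ e with Γ.src e = pV v', f e := by
  refine sum_nbij pE (fun e' he' => ?_) (fun a ha b hb hab => ?_) (fun e he => ?_)
    fun _ _ => rfl
  · simp only [mem_filter, mem_univ, true_and] at he' ⊢
    rw [← he', hcov.src_comm]
  · simp only [coe_filter, mem_univ, true_and, Set.mem_ofPred_eq] at ha hb
    obtain ⟨c, -, hc⟩ := hcov.existsUnique_lift v' (pE a) (by rw [← hcov.src_comm, ha])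
    rw [hc a ⟨ha, rfl⟩, hc b ⟨hb, hab.symm⟩]
  · simp only [coe_filter, mem_univ, true_and, Set.mem_ofPred_eq] at he
    obtain ⟨e', he', -⟩ := hcov.existsUnique_lift v' e he
    exact ⟨e', by simpa using he'.1, he'.2⟩

variable [Fintype V] [Fintype V'] [Fintype E] [Fintype E'] [DecidableEq V] [DecidableEq V']

theorem IsOutCovering.adj_mulVec_comp (hcov : Γ'.IsOutCovering Γ pV pE) (x : V → ℕ) :
    Γ'.adj *ᵥ (x ∘ pV) = (Γ.adj *ᵥ x) ∘ pV := by
  ext v'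
  simp only [Function.comp_apply, adj_mulVec_apply, hcov.tgt_comm]
  exact hcov.sum_out_edges (x ∘ Γ.tgt) v'

theorem IsOutCovering.adj_pow_mulVec_one (hcov : Γ'.IsOutCovering Γ pV pE) (n : ℕ) :
    Γ'.adj ^ n *ᵥ 1 = (Γ.adj ^ n *ᵥ 1) ∘ pV := by
  simpa using Matrix.pow_mulVec_comp hcov.adj_mulVec_comp n 1

end Digraph'

theorem spectralRadius_eq_of_nnnorm_pow_eq {A B : Type*} [NormedRing A] [NormedAlgebra ℂ A]
    [CompleteSpace A] [NormedRing B] [NormedAlgebra ℂ B] [CompleteSpace B] {a : A} {b : B}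
    (h : ∀ n : ℕ, ‖a ^ n‖₊ = ‖b ^ n‖₊) : spectralRadius ℂ a = spectralRadius ℂ b := by
  refine tendsto_nhds_unique ?_ (spectrum.pow_nnnorm_pow_one_div_tendsto_nhds_spectralRadius b)
  simpa only [h] using spectrum.pow_nnnorm_pow_one_div_tendsto_nhds_spectralRadius a

section LinftyOpNorm

attribute [local instance] Matrix.linftyOpNormedAddCommGroup Matrix.linftyOpNormedRing
  Matrix.linftyOpNormedAlgebra

theorem Matrix.linfty_opNNNorm_map_natCast {m n 𝕜 : Type*} [Fintype m] [Fintype n] [RCLike 𝕜]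
    (M : Matrix m n ℕ) :
    ‖M.map (Nat.cast : ℕ → 𝕜)‖₊ = univ.sup fun i => ((M *ᵥ 1) i : NNReal) := by
  simp [linfty_opNNNorm_def, mulVec, dotProduct_one]

theorem Digraph'.IsOutCovering.spectralRadius_adj_eq {V E V' E' : Type} [Fintype V] [Fintype V']
    [Fintype E] [Fintype E'] [DecidableEq V] [DecidableEq V'] {Γ : Digraph' V E}
    {Γ' : Digraph' V' E'} {pV : V' → V} {pE : E' → E} (hcov : Γ'.IsOutCovering Γ pV pE)
    (hsurj : Function.Surjective pV) :
    spectralRadius ℂ (Γ.adj.map (Nat.cast : ℕ → ℂ)) =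
      spectralRadius ℂ (Γ'.adj.map (Nat.cast : ℕ → ℂ)) := by
  refine spectralRadius_eq_of_nnnorm_pow_eq fun n => ?_
  rw [← Nat.coe_castRingHom, ← Matrix.map_pow, ← Matrix.map_pow, Nat.coe_castRingHom,
    linfty_opNNNorm_map_natCast, linfty_opNNNorm_map_natCast, hcov.adj_pow_mulVec_one n,
    ← image_univ_of_surjective hsurj, sup_image]
  rfl

end LinftyOpNorm

namespace IsDegreeTwoCover

variable {V E V' E' : Type} {Γ : Digraph' V E} {Γ' : Digraph' V' E'} {pV : V' → V}
  {pE : E' → E}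

theorem isOutCovering (hcov : IsDegreeTwoCover Γ' Γ pV pE) : Γ'.IsOutCovering Γ pV pE :=
  ⟨hcov.1, hcov.2.1, hcov.2.2.2.1⟩

theorem surjective (hcov : IsDegreeTwoCover Γ' Γ pV pE) : Function.Surjective pV := fun v => by
  obtain ⟨⟨v', hv'⟩⟩ := (Nat.card_pos_iff.1 (hcov.2.2.1 v ▸ two_pos)).1
  exact ⟨v', hv'⟩

end IsDegreeTwoCover

theorem degree_two_cover_spectralRadius_eq_general
    (V E V' E' : Type) [Fintype V] [DecidableEq V] [Fintype E]
    [Fintype V'] [DecidableEq V'] [Fintype E']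
    (Γ : Digraph' V E) (Γ' : Digraph' V' E')
    (pV : V' → V) (pE : E' → E)
    (hcov : IsDegreeTwoCover Γ' Γ pV pE) :
    spectralRadius ℂ (Γ.adj.map (Nat.cast : ℕ → ℂ)) =
      spectralRadius ℂ (Γ'.adj.map (Nat.cast : ℕ → ℂ)) :=
  hcov.isOutCovering.spectralRadius_adj_eq hcov.surjective

/-- Let `Γ` be an irreducible finite directed graph with adjacency matrix `A`, and let
`Γ'` be a degree-two cover of `Γ` with adjacency matrix `A'`.  If `Γ'` is irreducible,
then the Perron–Frobenius eigenvalues (spectral radii) of `A` and `A'` are equal. -/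
theorem degree_two_cover_spectralRadius_eq
    (V E V' E' : Type) [Fintype V] [DecidableEq V] [Fintype E]
    [Fintype V'] [DecidableEq V'] [Fintype E']
    (Γ : Digraph' V E) (Γ' : Digraph' V' E')
    (pV : V' → V) (pE : E' → E)
    (hcov : IsDegreeTwoCover Γ' Γ pV pE)
    (hirr : Γ.Irreducible) (hirr' : Γ'.Irreducible) :
    spectralRadius ℂ (Γ.adj.map (Nat.cast : ℕ → ℂ)) =
      spectralRadius ℂ (Γ'.adj.map (Nat.cast : ℕ → ℂ)) :=
  degree_two_cover_spectralRadius_eq_general V E V' E' Γ Γ' pV pE hcov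
end

section
/- Let G be a finitely generated residually finite group and φ : G → ℤ a surjective homomorphism with finitely generated kernel N. Then N is fully separable in G, i.e., every finite-index subgroup of N is closed in the profinite topology on G. -/
/-! Let `n = [N : N']`. As `N` is finitely generated, there are only finitely many
homomorphisms `N → Sym(n)`; the intersection `K` of their kernels is a characteristic subgroup
of finite index in `N`, contained in `N'` (which contains the kernel of the action of `N` on
`N / N'`), and hence normal in `G`. Pick `t` with `φ t = 1`. Then `T = K ⟨t⟩` has finite index
in `G` and `T ∩ N = K`. Given `g ∉ N'`, choose a finite-index subgroup `mℤ` of `ℤ` missing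
`φ g` when `φ g ≠ 0`: if `g⁻¹ y` with `y ∈ N'` lies in the normal core of `T` intersected with
`φ⁻¹(mℤ)`, then `φ g = 0`, so `g⁻¹ y ∈ T ∩ N = K ⊆ N'` and `g ∈ N'`. -/

open Subgroup

instance Group.finite_monoidHom_of_fg {A P : Type*} [Group A] [Group.FG A] [Monoid P] [Finite P] :
    Finite (A →* P) := by
  obtain ⟨S, hS, hSfin⟩ := Group.fg_iff.mp ‹Group.FG A›
  have := hSfin.to_subtype
  refine Finite.of_injective (fun f : A →* P => fun s : S => f s) fun f g hfg => ?_
  exact MonoidHom.eq_of_eqOn_dense hS fun x hx => congrFun hfg ⟨x, hx⟩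

instance Int.residuallyFinite_multiplicative : Group.ResiduallyFinite (Multiplicative ℤ) := by
  refine Group.residuallyFinite_of_forall_exists_finite_monoidHom fun z hz => ?_
  refine ⟨Multiplicative (ZMod (z.toAdd.natAbs + 1)), inferInstance, inferInstance,
    (Int.castAddHom _).toMultiplicative, fun h => ?_⟩
  have hdvd : ((z.toAdd.natAbs + 1 : ℕ) : ℤ) ∣ z.toAdd :=
    (ZMod.intCast_zmod_eq_zero_iff_dvd _ _).mp (congrArg Multiplicative.toAdd h)
  have hz' : z.toAdd.natAbs ≠ 0 := by simpa using hz
  have := Nat.le_of_dvd (Nat.pos_of_ne_zero hz') (Int.natCast_dvd.mp hdvd)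
  omega

theorem Int.zpowers_ofAdd_one : zpowers (Multiplicative.ofAdd (1 : ℤ)) = ⊤ :=
  eq_top_iff.mpr fun z _ => ⟨z.toAdd, by simp [← ofAdd_zsmul]⟩

namespace Subgroup

variable {G : Type*} [Group G]

def IsSeparable (H : Subgroup G) : Prop :=
  ∀ g : G, g ∉ H → ∃ N : Subgroup G, N.Normal ∧ N.FiniteIndex ∧
    ∀ y ∈ H, (QuotientGroup.mk g : G ⧸ N) ≠ QuotientGroup.mk y

def iInfKerPerm (A : Type*) [Group A] (n : ℕ) : Subgroup A :=
  ⨅ f : A →* Equiv.Perm (Fin n), f.ker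

section iInfKerPerm

variable {A : Type*} [Group A]

instance iInfKerPerm_characteristic (n : ℕ) : (iInfKerPerm A n).Characteristic := by
  refine characteristic_iff_le_comap.mpr fun σ x hx => ?_
  simp only [iInfKerPerm, mem_comap, mem_iInf, MonoidHom.mem_ker] at hx ⊢
  exact fun f => hx (f.comp σ.toMonoidHom)

instance iInfKerPerm_finiteIndex [Group.FG A] (n : ℕ) : (iInfKerPerm A n).FiniteIndex :=
  finiteIndex_iInf fun _ => inferInstance

theorem iInfKerPerm_index_le (H : Subgroup A) [H.FiniteIndex] : iInfKerPerm A H.index ≤ H := by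
  let e : A ⧸ H ≃ Fin H.index := Finite.equivFinOfCardEq (index_eq_card H).symm
  calc iInfKerPerm A H.index
      ≤ ((e.permCongrHom : _ →* _).comp (MulAction.toPermHom A (A ⧸ H))).ker := iInf_le _ _
    _ = H.normalCore := by
      rw [normalCore_eq_ker, MonoidHom.ker_comp_of_injective _ _ e.permCongrHom.injective]
    _ ≤ H := normalCore_le H

end iInfKerPerm

theorem normal_map_subtype_of_characteristic {A : Subgroup G} [A.Normal] (L : Subgroup A)
    [L.Characteristic] : (L.map A.subtype).Normal where
  conj_mem x hx g := by
    obtain ⟨a, ha, rfl⟩ := mem_map.mp hx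
    exact ⟨MulAut.conjNormal g a, characteristic_iff_le_comap.mp ‹_› (MulAut.conjNormal g) ha,
      by simp [MulAut.conjNormal_apply]⟩

theorem exists_normal_le_finiteIndex_subgroupOf {A H : Subgroup G} [A.Normal] [Group.FG A]
    [(H.subgroupOf A).FiniteIndex] :
    ∃ K : Subgroup G, K.Normal ∧ K ≤ H ∧ (K.subgroupOf A).FiniteIndex := by
  set L := iInfKerPerm A (H.subgroupOf A).index
  refine ⟨L.map A.subtype, normal_map_subtype_of_characteristic L, ?_, ?_⟩
  · rw [map_le_iff_le_comap]
    exact iInfKerPerm_index_le _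
  · rw [subgroupOf, comap_map_eq_self_of_injective A.subtype_injective]
    infer_instance

theorem finiteIndex_of_sup_eq_top {A T : Subgroup G} [A.Normal] (hAT : A ⊔ T = ⊤)
    [(T.subgroupOf A).FiniteIndex] : T.FiniteIndex := by
  let f : A ⧸ T.subgroupOf A → G ⧸ T := Quotient.map' Subtype.val fun a b h => by
    simpa [QuotientGroup.leftRel_apply, mem_subgroupOf] using h
  have hf : Function.Surjective f := by
    refine fun x => QuotientGroup.induction_on x fun g => ?_
    obtain ⟨a, ha, t, ht, rfl⟩ := mem_sup_of_normal_left.mp (hAT ▸ mem_top g)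
    exact ⟨QuotientGroup.mk ⟨a, ha⟩, QuotientGroup.eq.mpr (by simpa using T.inv_mem ht)⟩
  have := Finite.of_surjective f hf
  exact finiteIndex_of_finite_quotient

theorem sup_zpowers_inf_ker_le {M : Type*} [Group M] {φ : G →* M} {K : Subgroup G}
    [K.Normal] (hK : K ≤ φ.ker) {u : G} (hu : ¬IsOfFinOrder (φ u)) :
    (K ⊔ zpowers u) ⊓ φ.ker ≤ K := by
  rintro x ⟨hx, hxker⟩
  obtain ⟨k, hk, _, ⟨j, rfl⟩, rfl⟩ := mem_sup_of_normal_left.mp hx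
  have hj : φ u ^ j = 1 := by simpa [MonoidHom.mem_ker.mp (hK hk)] using hxker
  obtain rfl : j = 0 := by
    by_contra hj0
    exact hu (isOfFinOrder_iff_zpow_eq_one.mpr ⟨j, hj0, hj⟩)
  simpa using hk

theorem isSeparable_of_normal_le_of_le_ker {φ : G →* Multiplicative ℤ}
    (hφ : Function.Surjective φ) {K H : Subgroup G} [K.Normal] (hKH : K ≤ H) (hH : H ≤ φ.ker)
    [(K.subgroupOf φ.ker).FiniteIndex] : H.IsSeparable := by
  intro g hg
  obtain ⟨u, hu⟩ := hφ (Multiplicative.ofAdd 1)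
  let T := K ⊔ zpowers u
  have hker : φ.ker ⊔ zpowers u = ⊤ := by
    rw [sup_comm, ← comap_map_eq, MonoidHom.map_zpowers, hu, Int.zpowers_ofAdd_one, comap_top]
  have : (T.subgroupOf φ.ker).FiniteIndex := finiteIndex_of_le (subgroupOf_mono _ le_sup_left)
  have : T.FiniteIndex :=
    finiteIndex_of_sup_eq_top (top_le_iff.mp (hker.ge.trans (sup_le_sup_left le_sup_right _)))
  have hTker : T ⊓ φ.ker ≤ K :=
    sup_zpowers_inf_ker_le (hKH.trans hH) (hu ▸ not_isOfFinOrder_of_isMulTorsionFree (by simp))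
  obtain ⟨M, hM, hgM⟩ :
      ∃ M : Subgroup (Multiplicative ℤ), M.FiniteIndex ∧ (φ g ∈ M → φ g = 1) := by
    by_cases h : φ g = 1
    · exact ⟨⊤, inferInstance, fun _ => h⟩
    · obtain ⟨M, hM, hgM⟩ := Group.residuallyFinite_iff_exists_finiteIndex.mp inferInstance _ h
      exact ⟨M, hM, fun h' => absurd h' hgM⟩
  have : (M.comap φ).FiniteIndex :=
    ⟨by rw [M.index_comap_of_surjective hφ]; exact hM.index_ne_zero⟩
  refine ⟨T.normalCore ⊓ M.comap φ, inferInstance, inferInstance, fun y hy hgy => hg ?_⟩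
  obtain ⟨hT, hM'⟩ := mem_inf.mp (QuotientGroup.eq.mp hgy)
  have hy1 : φ y = 1 := hH hy
  have hg1 : φ g = 1 := hgM (by simpa [hy1] using inv_mem hM')
  have : g⁻¹ * y ∈ K := hTker ⟨normalCore_le _ hT, by simp [hg1, hy1]⟩
  simpa using H.mul_mem (hKH this) (H.inv_mem hy)

end Subgroup

theorem kernel_fully_separable_of_fg_general (G : Type) [Group G]
    (φ : G →* Multiplicative ℤ) (hsurj : Function.Surjective φ)
    (hfgker : Group.FG φ.ker) :
    ∀ N' : Subgroup G, N' ≤ φ.ker → (N'.subgroupOf φ.ker).FiniteIndex →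
      ∀ g : G, g ∉ N' →
        ∃ N : Subgroup G, N.Normal ∧ N.FiniteIndex ∧
          ∀ y ∈ N', (QuotientGroup.mk g : G ⧸ N) ≠ QuotientGroup.mk y := by
  intro N' hle hfi
  obtain ⟨K, hK, hKN', hKfi⟩ :=
    Subgroup.exists_normal_le_finiteIndex_subgroupOf (A := φ.ker) (H := N')
  exact Subgroup.isSeparable_of_normal_le_of_le_ker hsurj hKN' hle

/-- Let `G` be a finitely generated residually finite group and `φ : G → ℤ` a surjective
homomorphism with finitely generated kernel `N`.  Then `N` is fully separable in `G`:
every finite-index subgroup `N'` of `N` is closed in the profinite topology on `G`, i.e.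
every element of `G` outside `N'` is separated from `N'` in some finite quotient of `G`. -/
theorem kernel_fully_separable_of_fg (G : Type) [Group G] (hfg : Group.FG G)
    (hrf : ∀ g : G, g ≠ 1 → ∃ N : Subgroup G, N.Normal ∧ N.FiniteIndex ∧ g ∉ N)
    (φ : G →* Multiplicative ℤ) (hsurj : Function.Surjective φ)
    (hfgker : Group.FG φ.ker) :
    ∀ N' : Subgroup G, N' ≤ φ.ker → (N'.subgroupOf φ.ker).FiniteIndex →
      ∀ g : G, g ∉ N' →
        ∃ N : Subgroup G, N.Normal ∧ N.FiniteIndex ∧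
          ∀ y ∈ N', (QuotientGroup.mk g : G ⧸ N) ≠ QuotientGroup.mk y :=
  kernel_fully_separable_of_fg_general G φ hsurj hfgker
end
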